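/- arXiv:2305.00520 — 3 statements merged into one kernel-verified Lean document; each statement's English description precedes it below -/
import Mathlib

section
/- Let L(a,b) = ρ(a−b) satisfy the sandwich condition with constants 0 < c1 ≤ c2. Let w_0,...,w_M be nonnegative reals with Σ_{m=0}^{M} w_m = 1, let a_0,...,a_M ∈ ℝ, set ā = Σ_{m=0}^{M} w_m a_m, and let y, g0 ∈ ℝ and A > 0 be such that |a_m − g0| ≤ A for all m. Then Σ_{m=0}^{M} w_m ( ρ(y − a_m) − ρ(y − ā) )² ≤ ( |ρ'(y − g0)| + 4 c2 A )² · Σ_{m=0}^{M} w_m (a_m − ā)². -/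
/-!
Writing `ρ(t₁) - ρ(t₂) = ρ'(t₂)(t₁ - t₂) + R` with `0 ≤ R ≤ c₂ (t₁ - t₂)²`, and bounding `|ρ'(t₂)|`
through the `2c₂`-Lipschitz continuity of `ρ'`, every loss difference satisfies
`|ρ(y - a_m) - ρ(y - ā)| ≤ (|ρ'(y - g₀)| + 4c₂A) |a_m - ā|`, because `ā` stays within `A` of `g₀`
and hence within `2A` of every `a_m`. Squaring and averaging gives the claim.
-/

open Finset

/-- A loss `L(a,b) = ρ(a−b)` satisfies the sandwich condition with constants
`0 < c1 ≤ c2` if `ρ` is differentiable with derivative `ρ'`,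
`2c1|t1−t2| ≤ |ρ'(t1)−ρ'(t2)| ≤ 2c2|t1−t2|`, and
`c1(t1−t2)² ≤ ρ(t1)−ρ(t2)−ρ'(t2)(t1−t2) ≤ c2(t1−t2)²` for all `t1, t2`. -/
def SandwichCondition (ρ ρ' : ℝ → ℝ) (c1 c2 : ℝ) : Prop :=
  (∀ t : ℝ, HasDerivAt ρ (ρ' t) t) ∧
  (∀ t1 t2 : ℝ, 2 * c1 * |t1 - t2| ≤ |ρ' t1 - ρ' t2|) ∧
  (∀ t1 t2 : ℝ, |ρ' t1 - ρ' t2| ≤ 2 * c2 * |t1 - t2|) ∧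
  (∀ t1 t2 : ℝ, c1 * (t1 - t2) ^ 2 ≤ ρ t1 - ρ t2 - ρ' t2 * (t1 - t2)) ∧
  (∀ t1 t2 : ℝ, ρ t1 - ρ t2 - ρ' t2 * (t1 - t2) ≤ c2 * (t1 - t2) ^ 2)

theorem abs_sum_mul_sub_le_of_forall_abs_sub_le {ι : Type*} {s : Finset ι} {w a : ι → ℝ}
    {g A : ℝ} (hw : ∀ i ∈ s, 0 ≤ w i) (hw1 : ∑ i ∈ s, w i = 1) (ha : ∀ i ∈ s, |a i - g| ≤ A) :
    |∑ i ∈ s, w i * a i - g| ≤ A := by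
  simpa [Real.dist_eq] using
    (convex_closedBall g A).sum_mem hw hw1 (z := a) (by simpa [Real.dist_eq] using ha)

theorem sum_mul_sq_le_sq_mul_sum_of_abs_le {ι : Type*} (s : Finset ι) {w f g : ι → ℝ} {C : ℝ}
    (hw : ∀ i ∈ s, 0 ≤ w i) (hfg : ∀ i ∈ s, |f i| ≤ C * |g i|) :
    ∑ i ∈ s, w i * f i ^ 2 ≤ C ^ 2 * ∑ i ∈ s, w i * g i ^ 2 := by
  rw [mul_sum]
  refine sum_le_sum fun i hi => ?_
  calc w i * f i ^ 2 = w i * |f i| ^ 2 := by rw [sq_abs]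
    _ ≤ w i * (C * |g i|) ^ 2 := by
      gcongr
      · exact hw i hi
      · exact hfg i hi
    _ = C ^ 2 * (w i * g i ^ 2) := by rw [mul_pow, sq_abs]; ring

namespace SandwichCondition

variable {ρ ρ' : ℝ → ℝ} {c1 c2 : ℝ}

theorem abs_remainder_le (h : SandwichCondition ρ ρ' c1 c2) (hc1 : 0 ≤ c1) (t1 t2 : ℝ) :
    |ρ t1 - ρ t2 - ρ' t2 * (t1 - t2)| ≤ c2 * (t1 - t2) ^ 2 := by
  have hlower := h.2.2.2.1 t1 t2
  rw [abs_of_nonneg (le_trans (by positivity) hlower)]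
  exact h.2.2.2.2 t1 t2

theorem abs_deriv_le (h : SandwichCondition ρ ρ' c1 c2) (t s : ℝ) :
    |ρ' t| ≤ |ρ' s| + 2 * c2 * |t - s| := by
  linarith [h.2.2.1 t s, abs_sub_abs_le_abs_sub (ρ' t) (ρ' s)]

theorem abs_sub_le (h : SandwichCondition ρ ρ' c1 c2) (hc1 : 0 ≤ c1) (t1 t2 s : ℝ) :
    |ρ t1 - ρ t2| ≤ (|ρ' s| + 2 * c2 * |t2 - s| + c2 * |t1 - t2|) * |t1 - t2| := by
  calc |ρ t1 - ρ t2| = |ρ' t2 * (t1 - t2) + (ρ t1 - ρ t2 - ρ' t2 * (t1 - t2))| := by ring_nf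
    _ ≤ |ρ' t2| * |t1 - t2| + c2 * (t1 - t2) ^ 2 := by
      rw [← abs_mul]
      linarith [abs_add_le (ρ' t2 * (t1 - t2)) (ρ t1 - ρ t2 - ρ' t2 * (t1 - t2)),
        h.abs_remainder_le hc1 t1 t2]
    _ ≤ (|ρ' s| + 2 * c2 * |t2 - s| + c2 * |t1 - t2|) * |t1 - t2| := by
      rw [← sq_abs (t1 - t2)]
      nlinarith [h.abs_deriv_le t2 s, abs_nonneg (t1 - t2)]

end SandwichCondition

theorem weighted_loss_variance_upper_bound_general (ρ ρ' : ℝ → ℝ) (c1 c2 : ℝ)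
    (hc1 : 0 < c1) (hc12 : c1 ≤ c2) (hρ : SandwichCondition ρ ρ' c1 c2)
    (M : ℕ) (w : Fin (M + 1) → ℝ) (hw : ∀ m, 0 ≤ w m) (hw1 : ∑ m, w m = 1)
    (a : Fin (M + 1) → ℝ) (y g0 A : ℝ)
    (haA : ∀ m, |a m - g0| ≤ A) :
    ∑ m, w m * (ρ (y - a m) - ρ (y - ∑ m', w m' * a m')) ^ 2
      ≤ (|ρ' (y - g0)| + 4 * c2 * A) ^ 2
        * ∑ m, w m * (a m - ∑ m', w m' * a m') ^ 2 := by
  have hc2 : 0 ≤ c2 := hc1.le.trans hc12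
  set abar := ∑ m', w m' * a m'
  have habar : |abar - g0| ≤ A :=
    abs_sum_mul_sub_le_of_forall_abs_sub_le (fun m _ => hw m) hw1 (fun m _ => haA m)
  refine sum_mul_sq_le_sq_mul_sum_of_abs_le _ (fun m _ => hw m) fun m _ => ?_
  have hspread : |a m - abar| ≤ 2 * A := by
    linarith [abs_sub_le (a m) g0 abar, haA m, abs_sub_comm g0 abar]
  calc |ρ (y - a m) - ρ (y - abar)|
      ≤ (|ρ' (y - g0)| + 2 * c2 * |(y - abar) - (y - g0)| + c2 * |(y - a m) - (y - abar)|)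
          * |(y - a m) - (y - abar)| := hρ.abs_sub_le hc1.le _ _ _
    _ = (|ρ' (y - g0)| + 2 * c2 * |abar - g0| + c2 * |a m - abar|) * |a m - abar| := by
      rw [sub_sub_sub_cancel_left, sub_sub_sub_cancel_left, abs_sub_comm g0 abar,
        abs_sub_comm abar (a m)]
    _ ≤ (|ρ' (y - g0)| + 4 * c2 * A) * |a m - abar| := by
      refine mul_le_mul_of_nonneg_right ?_ (abs_nonneg _)
      linarith [mul_le_mul_of_nonneg_left habar hc2, mul_le_mul_of_nonneg_left hspread hc2]

/-- under the sandwich condition, for nonnegative weights `w_m` summing to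
one, values `a_m` with weighted average `ā`, and `y, g0, A` with `|a_m − g0| ≤ A` for all
`m`, `Σ_m w_m (ρ(y − a_m) − ρ(y − ā))² ≤ (|ρ'(y − g0)| + 4c2 A)² Σ_m w_m (a_m − ā)²`. -/
theorem weighted_loss_variance_upper_bound (ρ ρ' : ℝ → ℝ) (c1 c2 : ℝ)
    (hc1 : 0 < c1) (hc12 : c1 ≤ c2) (hρ : SandwichCondition ρ ρ' c1 c2)
    (M : ℕ) (w : Fin (M + 1) → ℝ) (hw : ∀ m, 0 ≤ w m) (hw1 : ∑ m, w m = 1)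
    (a : Fin (M + 1) → ℝ) (y g0 A : ℝ) (hA : 0 < A)
    (haA : ∀ m, |a m - g0| ≤ A) :
    ∑ m, w m * (ρ (y - a m) - ρ (y - ∑ m', w m' * a m')) ^ 2
      ≤ (|ρ' (y - g0)| + 4 * c2 * A) ^ 2
        * ∑ m, w m * (a m - ∑ m', w m' * a m') ^ 2 :=
  weighted_loss_variance_upper_bound_general ρ ρ' c1 c2 hc1 hc12 hρ M w hw hw1 a y g0 A haA
end

section
/- Let μ be a σ-finite measure on a measurable space and let g1, g2 be nonnegative measurable functions with ∫ g1 dμ = ∫ g2 dμ = 1 and g2 > 0 μ-almost everywhere. Then ∫ g1 log(g1/g2) dμ ≤ ∫ (g1 − g2)²/g2 dμ, with the convention 0·log 0 = 0. -/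
open MeasureTheory Real

/-! Since `log t ≤ t - 1`, pointwise
`g₁ log (g₁/g₂) ≤ g₁ (g₁/g₂ - 1) = (g₁ - g₂)²/g₂ + (g₁ - g₂)`,
and the last term integrates to `0` because both densities have total mass `1`. -/

lemma Real.mul_log_div_le_sq_sub_div_add_sub {a b : ℝ} (ha : 0 ≤ a) (hb : 0 ≤ b) :
    a * log (a / b) ≤ (a - b) ^ 2 / b + (a - b) := by
  obtain rfl | hb := hb.eq_or_lt
  · simpa using ha
  obtain rfl | ha := ha.eq_or_lt
  · simp [sq, hb.ne']
  calc a * log (a / b) ≤ a * (a / b - 1) :=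
        mul_le_mul_of_nonneg_left (log_le_sub_one_of_pos (div_pos ha hb)) ha.le
    _ = (a - b) ^ 2 / b + (a - b) := by field_simp; ring

theorem integral_mul_log_div_le_integral_sq_sub_div {X : Type*} [MeasurableSpace X]
    {μ : Measure X} {g₁ g₂ : X → ℝ} (hg₁ : Integrable g₁ μ) (hg₂ : Integrable g₂ μ)
    (h_eq : ∫ x, g₁ x ∂μ = ∫ x, g₂ x ∂μ) (hg₁_nn : 0 ≤ᵐ[μ] g₁) (hg₂_nn : 0 ≤ᵐ[μ] g₂)
    (hχ : Integrable (fun x ↦ (g₁ x - g₂ x) ^ 2 / g₂ x) μ) :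
    ∫ x, g₁ x * log (g₁ x / g₂ x) ∂μ ≤ ∫ x, (g₁ x - g₂ x) ^ 2 / g₂ x ∂μ := by
  by_cases hkl : Integrable (fun x ↦ g₁ x * log (g₁ x / g₂ x)) μ
  · calc ∫ x, g₁ x * log (g₁ x / g₂ x) ∂μ
          ≤ ∫ x, ((g₁ x - g₂ x) ^ 2 / g₂ x + (g₁ x - g₂ x)) ∂μ := by
            refine integral_mono_ae hkl (hχ.add (hg₁.sub' hg₂)) ?_
            filter_upwards [hg₁_nn, hg₂_nn] with x h₁ h₂
            exact mul_log_div_le_sq_sub_div_add_sub h₁ h₂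
      _ = ∫ x, (g₁ x - g₂ x) ^ 2 / g₂ x ∂μ := by
            rw [integral_add hχ (hg₁.sub' hg₂), integral_sub hg₁ hg₂, h_eq, sub_self, add_zero]
  · rw [integral_undef hkl]
    exact integral_nonneg_of_ae <| by
      filter_upwards [hg₂_nn] with x hx using div_nonneg (sq_nonneg _) hx

lemma integrable_and_integral_eq_one_of_lintegral_ofReal_eq_one {X : Type*} [MeasurableSpace X]
    {μ : Measure X} {g : X → ℝ} (hg : AEStronglyMeasurable g μ) (hg_nn : 0 ≤ᵐ[μ] g)
    (h : ∫⁻ x, ENNReal.ofReal (g x) ∂μ = 1) :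
    Integrable g μ ∧ ∫ x, g x ∂μ = 1 := by
  refine ⟨(lintegral_ofReal_ne_top_iff_integrable hg hg_nn).1 (by simp [h]), ?_⟩
  rw [integral_eq_lintegral_of_nonneg_ae hg_nn hg, h, ENNReal.toReal_one]

theorem kl_le_chiSq_general {X : Type*} [MeasurableSpace X]
    (μ : Measure X)
    (g1 g2 : X → ℝ) (h1 : Measurable g1) (h2 : Measurable g2)
    (h1nn : ∀ x, 0 ≤ g1 x) (h2nn : ∀ x, 0 ≤ g2 x)
    (h1int : ∫⁻ x, ENNReal.ofReal (g1 x) ∂μ = 1)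
    (h2int : ∫⁻ x, ENNReal.ofReal (g2 x) ∂μ = 1) :
    ENNReal.ofReal (∫ x, g1 x * Real.log (g1 x / g2 x) ∂μ)
      ≤ ∫⁻ x, ENNReal.ofReal ((g1 x - g2 x) ^ 2 / g2 x) ∂μ := by
  obtain hχ | hχ := eq_or_ne (∫⁻ x, ENNReal.ofReal ((g1 x - g2 x) ^ 2 / g2 x) ∂μ) ⊤
  · simp [hχ]
  have hχ_nn : 0 ≤ᵐ[μ] fun x ↦ (g1 x - g2 x) ^ 2 / g2 x :=
    ae_of_all _ fun x ↦ div_nonneg (sq_nonneg _) (h2nn x)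
  have hχ_int : Integrable (fun x ↦ (g1 x - g2 x) ^ 2 / g2 x) μ :=
    (lintegral_ofReal_ne_top_iff_integrable
      (((h1.sub h2).pow_const 2).div h2).aestronglyMeasurable hχ_nn).1 hχ
  obtain ⟨hg1, hg1_one⟩ := integrable_and_integral_eq_one_of_lintegral_ofReal_eq_one
    h1.aestronglyMeasurable (ae_of_all _ h1nn) h1int
  obtain ⟨hg2, hg2_one⟩ := integrable_and_integral_eq_one_of_lintegral_ofReal_eq_one
    h2.aestronglyMeasurable (ae_of_all _ h2nn) h2int
  rw [← ofReal_integral_eq_lintegral_ofReal hχ_int hχ_nn]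
  exact ENNReal.ofReal_le_ofReal <| integral_mul_log_div_le_integral_sq_sub_div hg1 hg2
    (hg1_one.trans hg2_one.symm) (ae_of_all _ h1nn) (ae_of_all _ h2nn) hχ_int

/-- for probability densities `g1, g2` with respect to a σ-finite measure
`μ`, with `g2 > 0` a.e., the Kullback–Leibler divergence is bounded by the chi-squared
distance: `∫ g1 log(g1/g2) dμ ≤ ∫ (g1 − g2)²/g2 dμ`.  (The right-hand side is formalized
as a lower Lebesgue integral so that an infinite chi-squared distance is handled
correctly; the convention `0·log 0 = 0` is automatic since `Real.log 0 = 0`.) -/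
theorem kl_le_chiSq {X : Type*} [MeasurableSpace X]
    (μ : Measure X) [SigmaFinite μ]
    (g1 g2 : X → ℝ) (h1 : Measurable g1) (h2 : Measurable g2)
    (h1nn : ∀ x, 0 ≤ g1 x) (h2nn : ∀ x, 0 ≤ g2 x)
    (h1int : ∫⁻ x, ENNReal.ofReal (g1 x) ∂μ = 1)
    (h2int : ∫⁻ x, ENNReal.ofReal (g2 x) ∂μ = 1)
    (h2pos : ∀ᵐ x ∂μ, 0 < g2 x) :
    ENNReal.ofReal (∫ x, g1 x * Real.log (g1 x / g2 x) ∂μ)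
      ≤ ∫⁻ x, ENNReal.ofReal ((g1 x - g2 x) ^ 2 / g2 x) ∂μ :=
  kl_le_chiSq_general μ g1 g2 h1 h2 h1nn h2nn h1int h2int
end

section
/- Let μ be a probability distribution on ℝ^p, let g : ℝ^p → [0,1] be measurable, and let (x_1,y_1),...,(x_ñ,y_ñ) be i.i.d. with x_i ∼ μ and y_i | x_i ∼ Bernoulli(g(x_i)). Let ĝ^(0),...,ĝ^(M) be fixed measurable candidate functions with values in (0,1), and let π_0,...,π_M be prior weights with π_m > 0 and Σ_m π_m = 1. Define the exponential weights with λ = 1 and the cross-entropy loss L(y, ĝ(x)) = −y log ĝ(x) − (1−y) log(1−ĝ(x)), and set g̃_i(x) = Σ_{m=0}^{M} w_{m,i} ĝ^(m)(x) for i = 1,...,ñ. Then for every m ∈ {0,...,M}, Σ_{i=1}^{ñ} E[ D(g ‖ g̃_i) ] ≤ log(1/π_m) + ñ · D(g ‖ ĝ^(m)), where D(g ‖ h) = ∫ [ g(x) log(g(x)/h(x)) + (1−g(x)) log((1−g(x))/(1−h(x))) ] μ(dx) and the expectation is over the sample (on which the random weights w_{m,i} depend). -/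
open MeasureTheory ProbabilityTheory Finset
open scoped ENNReal

/-- The exponential weights of the ART pipeline: given prior weights `pri`, a tuning
parameter `lam`, and per-observation losses `ℓ m j` of candidate `m` at observation `j`,
`expWeight pri lam ℓ m i = pri m · exp(−λ Σ_{j<i} ℓ m j) / Σ_{m'} pri m' · exp(−λ Σ_{j<i} ℓ m' j)`.
(For the first observation the sum over `j < i` is empty, so when `Σ_m pri m = 1` this
reduces to `w_{m,1} = pri m`.) -/
noncomputable def expWeight {M n : ℕ} (pri : Fin (M + 1) → ℝ) (lam : ℝ)
    (ℓ : Fin (M + 1) → Fin n → ℝ) (m : Fin (M + 1)) (i : Fin n) : ℝ :=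
  pri m * Real.exp (-lam * ∑ j ∈ Finset.Iio i, ℓ m j) /
    ∑ m' : Fin (M + 1), pri m' * Real.exp (-lam * ∑ j ∈ Finset.Iio i, ℓ m' j)

/-- The cross-entropy loss `L(y, q) = −y log q − (1−y) log(1−q)`. -/
noncomputable def crossEntropy (y q : ℝ) : ℝ :=
  -y * Real.log q - (1 - y) * Real.log (1 - q)

/-- The Kullback–Leibler divergence `D(g‖h)` between the joint densities
`K_g(x,y) = g(x)^y (1−g(x))^{1−y}` and `K_h(x,y) = h(x)^y (1−h(x))^{1−y}` with respect
to `μ × (counting measure on {0,1})`, i.e.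
`∫ [g log(g/h) + (1−g) log((1−g)/(1−h))] dμ`, formalized as a lower Lebesgue integral
(the integrand is pointwise nonnegative, and the divergence may be infinite). -/
noncomputable def bernoulliKL {X : Type*} [MeasurableSpace X] (μ : Measure X)
    (g h : X → ℝ) : ℝ≥0∞ :=
  ∫⁻ v, ENNReal.ofReal
    (g v * Real.log (g v / h v) + (1 - g v) * Real.log ((1 - g v) / (1 - h v))) ∂μ


/-!
Since `exp (-L(y, ·))` is affine for `y ∈ {0, 1}`, the factor `exp (-L(y_i, g̃_i(x_i)))` is the
ratio `Z_{i+1} / Z_i` of consecutive normalising constants of the exponential weights, so the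
cumulative loss of the mixture telescopes to `-log Z_ñ ≤ log (1 / π_m) + Σ_i L(y_i, ĝ^(m)(x_i))`.
In expectation, the weights of round `i` depend only on the earlier observations, which are
independent of `(x_i, y_i)`; conditioning on them turns `E L(y_i, g̃_i(x_i))` into the expected
cross-entropy risk `E R(g̃_i)`, and `R(h) = D(g ‖ h) + H(g)` with the Bayes entropy `H(g) ≤ log 2`
finite, so `H(g)` cancels from both sides.
-/

open Real

noncomputable def binKL (p q : ℝ) : ℝ :=
  p * log (p / q) + (1 - p) * log ((1 - p) / (1 - q))

lemma sub_le_mul_log_div {a b : ℝ} (ha : 0 ≤ a) (hb : 0 < b) : a - b ≤ a * log (a / b) := by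
  have h := mul_nonneg hb.le (InformationTheory.klFun_nonneg (div_nonneg ha hb.le))
  have hb' := hb.ne'
  rw [InformationTheory.klFun_apply] at h
  have : b * (a / b * log (a / b) + 1 - a / b) = a * log (a / b) + b - a := by
    field_simp
  linarith

lemma binKL_nonneg {p q : ℝ} (hp : p ∈ Set.Icc 0 1) (hq : q ∈ Set.Ioo 0 1) : 0 ≤ binKL p q := by
  have h₀ := sub_le_mul_log_div hp.1 hq.1
  have h₁ := sub_le_mul_log_div (sub_nonneg.2 hp.2) (sub_pos.2 hq.2)
  unfold binKL
  linarith

lemma mul_log_div_eq {a b : ℝ} (hb : b ≠ 0) : a * log (a / b) = a * log a - a * log b := by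
  rcases eq_or_ne a 0 with rfl | ha
  · simp
  · rw [log_div ha hb]; ring

lemma binKL_add_crossEntropy_self {p q : ℝ} (hq₀ : q ≠ 0) (hq₁ : q ≠ 1) :
    binKL p q + crossEntropy p p = crossEntropy p q := by
  rw [binKL, mul_log_div_eq hq₀, mul_log_div_eq (sub_ne_zero.2 hq₁.symm), crossEntropy,
    crossEntropy]
  ring

lemma crossEntropy_self (p : ℝ) : crossEntropy p p = binEntropy p := by
  simp only [crossEntropy, binEntropy, log_inv]
  ring

lemma crossEntropy_nonneg {y q : ℝ} (hy : y ∈ Set.Icc 0 1) (hq : q ∈ Set.Icc 0 1) :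
    0 ≤ crossEntropy y q := by
  have h₀ := mul_nonpos_of_nonneg_of_nonpos hy.1 (log_nonpos hq.1 hq.2)
  have h₁ := mul_nonpos_of_nonneg_of_nonpos (sub_nonneg.2 hy.2)
    (log_nonpos (sub_nonneg.2 hq.2) (sub_le_self 1 hq.1))
  unfold crossEntropy
  linarith

lemma Measurable.crossEntropy {α : Type*} [MeasurableSpace α] {f g : α → ℝ} (hf : Measurable f)
    (hg : Measurable g) : Measurable fun a => crossEntropy (f a) (g a) := by
  unfold _root_.crossEntropy
  fun_prop

lemma exp_neg_crossEntropy {y q : ℝ} (hy : y = 0 ∨ y = 1) (hq : q ∈ Set.Ioo 0 1) :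
    exp (-crossEntropy y q) = y * q + (1 - y) * (1 - q) := by
  rcases hy with rfl | rfl <;> simp [crossEntropy, exp_log, hq.1, hq.2]

lemma exp_neg_crossEntropy_sum_mul {ι : Type*} {s : Finset ι} {y : ℝ} (hy : y = 0 ∨ y = 1)
    {w q : ι → ℝ} (hw₀ : ∀ i ∈ s, 0 ≤ w i) (hw₁ : ∑ i ∈ s, w i = 1)
    (hq : ∀ i ∈ s, q i ∈ Set.Ioo 0 1) :
    exp (-crossEntropy y (∑ i ∈ s, w i * q i)) = ∑ i ∈ s, w i * exp (-crossEntropy y (q i)) := by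
  have hmix : ∑ i ∈ s, w i * q i ∈ Set.Ioo 0 1 := (convex_Ioo 0 1).sum_mem hw₀ hw₁ hq
  have hterm : ∀ i ∈ s, w i * exp (-crossEntropy y (q i)) = y * (w i * q i) + (1 - y) * w i
      - (1 - y) * (w i * q i) := fun i hi => by
    rw [exp_neg_crossEntropy hy (hq i hi)]; ring
  rw [exp_neg_crossEntropy hy hmix, Finset.sum_congr rfl hterm, Finset.sum_sub_distrib,
    Finset.sum_add_distrib, ← Finset.mul_sum, ← Finset.mul_sum, ← Finset.mul_sum, hw₁]
  ring

section GibbsWeights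

variable {ι : Type*} [Fintype ι]

noncomputable def gibbsWeight (pri L : ι → ℝ) (m : ι) : ℝ :=
  pri m * exp (-L m) / ∑ m', pri m' * exp (-L m')

variable {pri : ι → ℝ}

lemma gibbsWeight_nonneg (hpri : ∀ m, 0 ≤ pri m) (L : ι → ℝ) (m : ι) :
    0 ≤ gibbsWeight pri L m :=
  div_nonneg (mul_nonneg (hpri m) (exp_pos _).le)
    (Finset.sum_nonneg fun m' _ => mul_nonneg (hpri m') (exp_pos _).le)

lemma sum_gibbsWeight [Nonempty ι] (hpri : ∀ m, 0 < pri m) (L : ι → ℝ) :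
    ∑ m, gibbsWeight pri L m = 1 := by
  simp only [gibbsWeight, ← Finset.sum_div]
  exact div_self (Finset.sum_pos (fun m _ => mul_pos (hpri m) (exp_pos _))
    Finset.univ_nonempty).ne'

lemma measurable_gibbsWeight (pri : ι → ℝ) (m : ι) :
    Measurable fun L : ι → ℝ => gibbsWeight pri L m := by
  unfold gibbsWeight
  fun_prop

end GibbsWeights

section ExpWeights

variable {M n : ℕ} {pri : Fin (M + 1) → ℝ} {lam : ℝ} {ℓ : Fin (M + 1) → Fin n → ℝ}

lemma expWeight_eq_gibbsWeight (m : Fin (M + 1)) (i : Fin n) :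
    expWeight pri lam ℓ m i = gibbsWeight pri (fun m => lam * ∑ j ∈ Finset.Iio i, ℓ m j) m := by
  simp only [expWeight, gibbsWeight, neg_mul]

lemma expWeight_nonneg (hpri : ∀ m, 0 ≤ pri m) (m : Fin (M + 1)) (i : Fin n) :
    0 ≤ expWeight pri lam ℓ m i :=
  expWeight_eq_gibbsWeight m i ▸ gibbsWeight_nonneg hpri _ m

lemma sum_expWeight (hpri : ∀ m, 0 < pri m) (i : Fin n) : ∑ m, expWeight pri lam ℓ m i = 1 := by
  simp only [expWeight_eq_gibbsWeight, sum_gibbsWeight hpri]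

/-- The normalising constant of the weights of round `k`; indexed by `ℕ` so that `k = n`, after
the last round, is allowed. -/
noncomputable def expWeightNormalizer (pri : Fin (M + 1) → ℝ) (lam : ℝ)
    (ℓ : Fin (M + 1) → Fin n → ℝ) (k : ℕ) : ℝ :=
  ∑ m, pri m * exp (-lam * ∑ j ∈ Finset.univ.filter (fun j : Fin n => (j : ℕ) < k), ℓ m j)

lemma expWeightNormalizer_pos (hpri : ∀ m, 0 < pri m) (k : ℕ) :
    0 < expWeightNormalizer pri lam ℓ k :=
  Finset.sum_pos (fun m _ => mul_pos (hpri m) (exp_pos _)) Finset.univ_nonempty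

lemma sum_expWeight_mul_exp (i : Fin n) :
    ∑ m, expWeight pri lam ℓ m i * exp (-lam * ℓ m i)
      = expWeightNormalizer pri lam ℓ (i + 1) / expWeightNormalizer pri lam ℓ i := by
  have hIio : Finset.univ.filter (fun j : Fin n => (j : ℕ) < i) = Finset.Iio i := by
    ext j
    simp
  have hIic : Finset.univ.filter (fun j : Fin n => (j : ℕ) < i + 1) = insert i (Finset.Iio i) := by
    ext j
    simp only [Finset.mem_filter, Finset.mem_univ, true_and, Finset.mem_insert, Finset.mem_Iio,
      Fin.lt_def]
    omega
  simp only [expWeight, expWeightNormalizer, hIio, hIic,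
    Finset.sum_insert Finset.notMem_Iio_self, div_mul_eq_mul_div,
    ← Finset.sum_div, mul_assoc, ← exp_add]
  congr 1
  refine Finset.sum_congr rfl fun m _ => ?_
  ring_nf

lemma mul_sum_eq_neg_log_of_exp_neg_mul (hpri : ∀ m, 0 < pri m) (hpri₁ : ∑ m, pri m = 1)
    {q : Fin n → ℝ}
    (hq : ∀ i, exp (-lam * q i) = ∑ m, expWeight pri lam ℓ m i * exp (-lam * ℓ m i)) :
    lam * ∑ i, q i = -log (∑ m, pri m * exp (-lam * ∑ i, ℓ m i)) := by
  set Z := expWeightNormalizer pri lam ℓ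
  have hZ := expWeightNormalizer_pos (lam := lam) (ℓ := ℓ) hpri
  have hstep : ∀ i : Fin n, lam * q i = log (Z i) - log (Z (i + 1)) := fun i => by
    have := congrArg log ((hq i).trans (sum_expWeight_mul_exp i))
    rw [log_exp, log_div (hZ _).ne' (hZ _).ne'] at this
    linarith
  have hZ₀ : Z 0 = 1 := by simp [Z, expWeightNormalizer, hpri₁]
  have hZn : Z n = ∑ m, pri m * exp (-lam * ∑ i, ℓ m i) := by
    simp [Z, expWeightNormalizer]
  rw [Finset.mul_sum, Finset.sum_congr rfl fun i _ => hstep i,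
    Fin.sum_univ_eq_sum_range (fun k => log (Z k) - log (Z (k + 1))),
    Finset.sum_range_sub', hZ₀, hZn, log_one, zero_sub]

lemma mul_sum_le_log_inv_add_of_exp_neg_mul (hpri : ∀ m, 0 < pri m) (hpri₁ : ∑ m, pri m = 1)
    {q : Fin n → ℝ}
    (hq : ∀ i, exp (-lam * q i) = ∑ m, expWeight pri lam ℓ m i * exp (-lam * ℓ m i))
    (m : Fin (M + 1)) :
    lam * ∑ i, q i ≤ log (1 / pri m) + lam * ∑ i, ℓ m i := by
  have hterm : pri m * exp (-lam * ∑ i, ℓ m i) ≤ ∑ m', pri m' * exp (-lam * ∑ i, ℓ m' i) :=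
    Finset.single_le_sum (f := fun m' => pri m' * exp (-lam * ∑ i, ℓ m' i))
      (fun m' _ => mul_nonneg (hpri m').le (exp_pos _).le) (Finset.mem_univ m)
  have hlog := log_le_log (mul_pos (hpri m) (exp_pos _)) hterm
  rw [log_mul (hpri m).ne' (exp_pos _).ne', log_exp] at hlog
  rw [mul_sum_eq_neg_log_of_exp_neg_mul hpri hpri₁ hq, one_div, log_inv]
  linarith

end ExpWeights

section Aggregate

variable {X ι κ : Type*} [Fintype ι] [Fintype κ] {pri : ι → ℝ} {ghat : ι → X → ℝ}

noncomputable def cumulativeLoss (ghat : ι → X → ℝ) (s : κ → X × ℝ) (m : ι) : ℝ :=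
  ∑ j, crossEntropy (s j).2 (ghat m (s j).1)

noncomputable def aggregate (pri : ι → ℝ) (ghat : ι → X → ℝ) (s : κ → X × ℝ) (v : X) : ℝ :=
  ∑ m, gibbsWeight pri (cumulativeLoss ghat s) m * ghat m v

lemma aggregate_mem_Ioo [Nonempty ι] (hpri : ∀ m, 0 < pri m)
    (hghat : ∀ m v, ghat m v ∈ Set.Ioo 0 1) (s : κ → X × ℝ) (v : X) :
    aggregate pri ghat s v ∈ Set.Ioo 0 1 :=
  (convex_Ioo 0 1).sum_mem (fun m _ => gibbsWeight_nonneg (fun m => (hpri m).le) _ m)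
    (sum_gibbsWeight hpri _) (fun m _ => hghat m v)

lemma measurable_aggregate [MeasurableSpace X] (hghat : ∀ m, Measurable (ghat m)) :
    Measurable (Function.uncurry (aggregate pri ghat : (κ → X × ℝ) → X → ℝ)) := by
  have hloss : ∀ m, Measurable fun s : κ → X × ℝ => cumulativeLoss ghat s m := fun m =>
    Finset.measurable_sum _ fun j _ => (measurable_pi_apply j).snd.crossEntropy
      ((hghat m).comp (measurable_pi_apply j).fst)
  refine Finset.measurable_sum _ fun m _ => Measurable.mul ?_ ((hghat m).comp measurable_snd)
  exact (measurable_gibbsWeight pri m).comp ((measurable_pi_lambda _ hloss).comp measurable_fst)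

end Aggregate

section AggregateExpWeight

variable {X : Type*} {M n : ℕ} {pri : Fin (M + 1) → ℝ} {ghat : Fin (M + 1) → X → ℝ}

lemma gibbsWeight_cumulativeLoss_Iio (D : Fin n → X × ℝ) (i : Fin n) (m : Fin (M + 1)) :
    gibbsWeight pri (cumulativeLoss ghat fun j : Finset.Iio i => D j) m
      = expWeight pri 1 (fun m j => crossEntropy (D j).2 (ghat m (D j).1)) m i := by
  rw [expWeight_eq_gibbsWeight]
  congr 1
  funext m'
  rw [one_mul, cumulativeLoss]
  exact Finset.sum_coe_sort (Finset.Iio i) fun j => crossEntropy (D j).2 (ghat m' (D j).1)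

/-- The logarithmic loss is mixable: `exp (-crossEntropy y ·)` is affine for `y ∈ {0, 1}`, so the
telescoping bound of the exponential weights applies with `λ = 1`. -/
lemma sum_crossEntropy_aggregate_le (hpri : ∀ m, 0 < pri m) (hpri₁ : ∑ m, pri m = 1)
    (hghat : ∀ m v, ghat m v ∈ Set.Ioo 0 1) (D : Fin n → X × ℝ)
    (hD : ∀ i, (D i).2 = 0 ∨ (D i).2 = 1) (m : Fin (M + 1)) :
    ∑ i, crossEntropy (D i).2 (aggregate pri ghat (fun j : Finset.Iio i => D j) (D i).1)
      ≤ log (1 / pri m) + ∑ i, crossEntropy (D i).2 (ghat m (D i).1) := by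
  set ℓ : Fin (M + 1) → Fin n → ℝ := fun m j => crossEntropy (D j).2 (ghat m (D j).1)
  have hmix : ∀ i, exp (-1 * crossEntropy (D i).2 (∑ m, expWeight pri 1 ℓ m i * ghat m (D i).1))
      = ∑ m, expWeight pri 1 ℓ m i * exp (-1 * ℓ m i) := fun i => by
    simpa only [neg_one_mul] using exp_neg_crossEntropy_sum_mul (hD i)
      (fun m _ => expWeight_nonneg (fun m => (hpri m).le) m i) (sum_expWeight hpri i)
      (fun m _ => hghat m (D i).1)
  simp only [aggregate, gibbsWeight_cumulativeLoss_Iio]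
  simpa only [one_mul] using mul_sum_le_log_inv_add_of_exp_neg_mul hpri hpri₁ hmix m

lemma sum_ofReal_crossEntropy_aggregate_le (hpri : ∀ m, 0 < pri m) (hpri₁ : ∑ m, pri m = 1)
    (hghat : ∀ m v, ghat m v ∈ Set.Ioo 0 1) (D : Fin n → X × ℝ)
    (hD : ∀ i, (D i).2 = 0 ∨ (D i).2 = 1) (m : Fin (M + 1)) :
    ∑ i, ENNReal.ofReal
        (crossEntropy (D i).2 (aggregate pri ghat (fun j : Finset.Iio i => D j) (D i).1))
      ≤ ENNReal.ofReal (log (1 / pri m))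
        + ∑ i, ENNReal.ofReal (crossEntropy (D i).2 (ghat m (D i).1)) := by
  have hpri_le : pri m ≤ 1 :=
    hpri₁ ▸ Finset.single_le_sum (fun m' _ => (hpri m').le) (Finset.mem_univ m)
  have hCE : ∀ i q, q ∈ Set.Ioo (0 : ℝ) 1 → 0 ≤ crossEntropy (D i).2 q := fun i q hq =>
    crossEntropy_nonneg (by rcases hD i with h | h <;> simp [h]) (Set.Ioo_subset_Icc_self hq)
  rw [← ENNReal.ofReal_sum_of_nonneg fun i _ => hCE i _ (aggregate_mem_Ioo hpri hghat _ _),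
    ← ENNReal.ofReal_sum_of_nonneg fun i _ => hCE i _ (hghat m _),
    ← ENNReal.ofReal_add (log_nonneg (one_le_one_div (hpri m) hpri_le))
      (Finset.sum_nonneg fun i _ => hCE i _ (hghat m _))]
  exact ENNReal.ofReal_le_ofReal (sum_crossEntropy_aggregate_le hpri hpri₁ hghat D hD m)

end AggregateExpWeight

section Risk

variable {X : Type*} [MeasurableSpace X] {μ : Measure X} {g h : X → ℝ}

noncomputable def crossEntropyRisk (μ : Measure X) (g h : X → ℝ) : ℝ≥0∞ :=
  ∫⁻ v, ENNReal.ofReal (crossEntropy (g v) (h v)) ∂μ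

lemma crossEntropyRisk_self_ne_top [IsFiniteMeasure μ] (g : X → ℝ) :
    crossEntropyRisk μ g g ≠ ∞ := by
  refine ne_top_of_le_ne_top (lintegral_const_lt_top (μ := μ) ENNReal.ofReal_ne_top).ne
    (lintegral_mono fun v => ENNReal.ofReal_le_ofReal (q := log 2) ?_)
  rw [crossEntropy_self]
  exact binEntropy_le_log_two

lemma bernoulliKL_eq_lintegral_binKL (μ : Measure X) (g h : X → ℝ) :
    bernoulliKL μ g h = ∫⁻ v, ENNReal.ofReal (binKL (g v) (h v)) ∂μ :=
  rfl

lemma bernoulliKL_add_crossEntropyRisk_self (hg : Measurable g)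
    (hg01 : ∀ v, g v ∈ Set.Icc 0 1) (hh01 : ∀ v, h v ∈ Set.Ioo 0 1) :
    bernoulliKL μ g h + crossEntropyRisk μ g g = crossEntropyRisk μ g h := by
  rw [bernoulliKL_eq_lintegral_binKL, crossEntropyRisk, crossEntropyRisk,
    ← lintegral_add_right _ (hg.crossEntropy hg).ennreal_ofReal]
  refine lintegral_congr fun v => ?_
  rw [← ENNReal.ofReal_add (binKL_nonneg (hg01 v) (hh01 v))
    (crossEntropy_nonneg (hg01 v) (hg01 v)),
    binKL_add_crossEntropy_self (hh01 v).1.ne' (hh01 v).2.ne]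

end Risk

lemma ProbabilityTheory.IndepFun.lintegral_comp_eq_lintegral_lintegral {Ω α β : Type*}
    [MeasurableSpace Ω] [MeasurableSpace α] [MeasurableSpace β] {P : Measure Ω}
    [IsFiniteMeasure P] {W : Ω → α} {Z : Ω → β} (hWZ : IndepFun W Z P) (hW : Measurable W)
    (hZ : Measurable Z) {F : α → β → ℝ≥0∞} (hF : Measurable (Function.uncurry F)) :
    ∫⁻ ω, F (W ω) (Z ω) ∂P = ∫⁻ ω, ∫⁻ ω', F (W ω) (Z ω') ∂P ∂P := by
  calc ∫⁻ ω, F (W ω) (Z ω) ∂P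
      = ∫⁻ p, Function.uncurry F p ∂(P.map fun ω => (W ω, Z ω)) :=
        (lintegral_map hF (hW.prodMk hZ)).symm
    _ = ∫⁻ p, Function.uncurry F p ∂((P.map W).prod (P.map Z)) := by
        rw [(indepFun_iff_map_prod_eq_prod_map_map hW.aemeasurable hZ.aemeasurable).1 hWZ]
    _ = ∫⁻ w, ∫⁻ z, F w z ∂(P.map Z) ∂(P.map W) := lintegral_prod _ hF.aemeasurable
    _ = ∫⁻ ω, ∫⁻ z, F (W ω) z ∂(P.map Z) ∂P := lintegral_map hF.lintegral_prod_right' hW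
    _ = _ := lintegral_congr fun ω => lintegral_map (hF.comp measurable_prodMk_left) hZ
lemma ProbabilityTheory.iIndepFun.indepFun_Iio {Ω ι β : Type*} [MeasurableSpace Ω]
    [MeasurableSpace β] [LinearOrder ι] [LocallyFiniteOrderBot ι] {P : Measure Ω}
    {Z : ι → Ω → β} (hZ : iIndepFun Z P) (hmeas : ∀ i, Measurable (Z i)) (i : ι) :
    IndepFun (fun ω (j : Finset.Iio i) => Z j ω) (Z i) P :=
  (hZ.indepFun_finset (Finset.Iio i) {i} (by simp) hmeas).comp measurable_id
    (measurable_pi_apply (⟨i, Finset.mem_singleton_self i⟩ : ({i} : Finset ι)))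

section BernoulliResponse

variable {Ω X : Type*} [MeasurableSpace Ω] [MeasurableSpace X] {P : Measure Ω} {μ : Measure X}

lemma map_restrict_eq_withDensity_of_condExp_indicator [IsFiniteMeasure P] {x : Ω → X}
    {A : Set Ω} {f : X → ℝ} (hx : Measurable x) (hA : MeasurableSet A) (hxlaw : P.map x = μ)
    (hf : Measurable f)
    (hcond : P[A.indicator 1 | MeasurableSpace.comap x inferInstance] =ᵐ[P] fun ω => f (x ω)) :
    (P.restrict A).map x = μ.withDensity fun v => ENNReal.ofReal (f v) := by
  have hint : Integrable (A.indicator (1 : Ω → ℝ)) P := (integrable_const 1).indicator hA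
  have hfx_int : Integrable (fun ω => f (x ω)) P := integrable_condExp.congr hcond
  have hind_nonneg : 0 ≤ᵐ[P] A.indicator (1 : Ω → ℝ) :=
    Filter.Eventually.of_forall fun ω => Set.indicator_nonneg (fun _ _ => zero_le_one) ω
  have hfx_nonneg : 0 ≤ᵐ[P] fun ω => f (x ω) := by
    filter_upwards [condExp_nonneg (m := MeasurableSpace.comap x inferInstance) hind_nonneg,
      hcond] with ω hpos heq
    exact heq ▸ hpos
  ext t ht
  calc (P.restrict A).map x t = P (x ⁻¹' t ∩ A) := by
        rw [Measure.map_apply hx ht, Measure.restrict_apply (hx ht)]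
    _ = ENNReal.ofReal (∫ ω in x ⁻¹' t, A.indicator 1 ω ∂P) := by
        rw [integral_indicator_one hA, measureReal_def, Measure.restrict_apply hA, Set.inter_comm,
          ENNReal.ofReal_toReal (measure_ne_top _ _)]
    _ = ENNReal.ofReal (∫ ω in x ⁻¹' t, f (x ω) ∂P) := by
        rw [← setIntegral_condExp hx.comap_le hint ⟨t, ht, rfl⟩,
          setIntegral_congr_ae (hx ht) (hcond.mono fun ω h _ => h)]
    _ = ∫⁻ ω in x ⁻¹' t, ENNReal.ofReal (f (x ω)) ∂P :=
        ofReal_integral_eq_lintegral_ofReal hfx_int.integrableOn (ae_restrict_of_ae hfx_nonneg)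
    _ = _ := by rw [withDensity_apply _ ht, ← hxlaw, setLIntegral_map ht hf.ennreal_ofReal hx]

/-- `y` is a `{0,1}`-valued response to the design point `x ∼ μ` with `P(y = 1 | x) = g x`. -/
structure IsBernoulliResponse (P : Measure Ω) (x : Ω → X) (y : Ω → ℝ) (μ : Measure X)
    (g : X → ℝ) : Prop where
  measurable_design : Measurable x
  measurable_response : Measurable y
  map_design : P.map x = μ
  response_eq_zero_or_one : ∀ ω, y ω = 0 ∨ y ω = 1
  condExp_response : P[y | MeasurableSpace.comap x inferInstance] =ᵐ[P] fun ω => g (x ω)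

namespace IsBernoulliResponse

variable {x : Ω → X} {y : Ω → ℝ} {g : X → ℝ}

lemma indicator_eq_one (hB : IsBernoulliResponse P x y μ g) :
    {ω | y ω = 1}.indicator 1 = y := by
  funext ω
  rcases hB.response_eq_zero_or_one ω with h | h <;> simp [h]

lemma map_restrict_eq_one [IsFiniteMeasure P] (hB : IsBernoulliResponse P x y μ g)
    (hg : Measurable g) :
    (P.restrict {ω | y ω = 1}).map x = μ.withDensity fun v => ENNReal.ofReal (g v) :=
  map_restrict_eq_withDensity_of_condExp_indicator hB.measurable_design
    (hB.measurable_response (measurableSet_singleton 1)) hB.map_design hg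
    (by rw [hB.indicator_eq_one]; exact hB.condExp_response)

lemma map_restrict_eq_zero [IsFiniteMeasure P] (hB : IsBernoulliResponse P x y μ g)
    (hg : Measurable g) :
    (P.restrict {ω | y ω = 0}).map x = μ.withDensity fun v => ENNReal.ofReal (1 - g v) := by
  have hA := hB.measurable_response (measurableSet_singleton 1)
  have hy : Integrable y P := hB.indicator_eq_one ▸ (integrable_const 1).indicator hA
  have hind : {ω | y ω = 0}.indicator 1 = fun ω => 1 - y ω := by
    funext ω
    rcases hB.response_eq_zero_or_one ω with h | h <;> simp [h]
  refine map_restrict_eq_withDensity_of_condExp_indicator hB.measurable_design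
    (hB.measurable_response (measurableSet_singleton 0)) hB.map_design
    (measurable_const.sub hg) ?_
  rw [hind]
  filter_upwards [condExp_sub (integrable_const 1) hy (MeasurableSpace.comap x inferInstance),
    hB.condExp_response] with ω hsub hy
  rw [show (fun ω => 1 - y ω) = (fun _ => (1 : ℝ)) - y from rfl, hsub, Pi.sub_apply,
    condExp_const hB.measurable_design.comap_le, hy]

lemma lintegral_comp [IsFiniteMeasure P] (hB : IsBernoulliResponse P x y μ g)
    (hg : Measurable g)
    {F : X → ℝ → ℝ≥0∞} (hF₀ : Measurable fun v => F v 0) (hF₁ : Measurable fun v => F v 1) :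
    ∫⁻ ω, F (x ω) (y ω) ∂P
      = ∫⁻ v, ENNReal.ofReal (g v) * F v 1 + ENNReal.ofReal (1 - g v) * F v 0 ∂μ := by
  have hx := hB.measurable_design
  have hA₁ : MeasurableSet {ω | y ω = 1} := hB.measurable_response (measurableSet_singleton 1)
  have hA₀ : MeasurableSet {ω | y ω = 0} := hB.measurable_response (measurableSet_singleton 0)
  have hsplit : ∀ ω, F (x ω) (y ω) = {ω | y ω = 1}.indicator (fun ω => F (x ω) 1) ω
      + {ω | y ω = 0}.indicator (fun ω => F (x ω) 0) ω := fun ω => by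
    rcases hB.response_eq_zero_or_one ω with h | h <;> simp [h]
  have h1g : Measurable fun v => ENNReal.ofReal (1 - g v) :=
    (measurable_const.sub hg).ennreal_ofReal
  have hF₁x : Measurable ({ω | y ω = 1}.indicator fun ω => F (x ω) 1) :=
    (hF₁.comp hx).indicator hA₁
  rw [lintegral_congr hsplit, lintegral_add_left hF₁x,
    lintegral_indicator hA₁, lintegral_indicator hA₀, ← lintegral_map hF₁ hx,
    ← lintegral_map hF₀ hx, hB.map_restrict_eq_one hg, hB.map_restrict_eq_zero hg,
    lintegral_withDensity_eq_lintegral_mul _ hg.ennreal_ofReal hF₁,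
    lintegral_withDensity_eq_lintegral_mul _ h1g hF₀,
    ← lintegral_add_left (hg.ennreal_ofReal.mul hF₁)]
  rfl

lemma lintegral_ofReal_crossEntropy [IsFiniteMeasure P] (hB : IsBernoulliResponse P x y μ g)
    (hg : Measurable g)
    (hg01 : ∀ v, g v ∈ Set.Icc 0 1) {h : X → ℝ} (hh : Measurable h)
    (hh01 : ∀ v, h v ∈ Set.Ioo 0 1) :
    ∫⁻ ω, ENNReal.ofReal (crossEntropy (y ω) (h (x ω))) ∂P = crossEntropyRisk μ g h := by
  rw [hB.lintegral_comp hg (F := fun v t => ENNReal.ofReal (crossEntropy t (h v)))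
    (measurable_const.crossEntropy hh).ennreal_ofReal
    (measurable_const.crossEntropy hh).ennreal_ofReal, crossEntropyRisk]
  refine lintegral_congr fun v => ?_
  have hCE : ∀ t ∈ Set.Icc (0 : ℝ) 1, 0 ≤ crossEntropy t (h v) := fun t ht =>
    crossEntropy_nonneg ht (Set.Ioo_subset_Icc_self (hh01 v))
  have hg₀ : 0 ≤ g v := (hg01 v).1
  have hg₁ : 0 ≤ 1 - g v := sub_nonneg.2 (hg01 v).2
  rw [← ENNReal.ofReal_mul hg₀, ← ENNReal.ofReal_mul hg₁,
    ← ENNReal.ofReal_add (mul_nonneg hg₀ (hCE 1 (by simp))) (mul_nonneg hg₁ (hCE 0 (by simp)))]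
  congr 1
  simp only [crossEntropy]
  ring

lemma lintegral_bernoulliKL_add_crossEntropyRisk_self [IsProbabilityMeasure P]
    (hB : IsBernoulliResponse P x y μ g) (hg : Measurable g) (hg01 : ∀ v, g v ∈ Set.Icc 0 1)
    {α : Type*} [MeasurableSpace α] {W : Ω → α} (hW : Measurable W)
    (hWxy : IndepFun W (fun ω => (x ω, y ω)) P) {F : α → X → ℝ}
    (hF : Measurable (Function.uncurry F)) (hF01 : ∀ a v, F a v ∈ Set.Ioo 0 1) :
    ∫⁻ ω, bernoulliKL μ g (F (W ω)) ∂P + crossEntropyRisk μ g g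
      = ∫⁻ ω, ENNReal.ofReal (crossEntropy (y ω) (F (W ω) (x ω))) ∂P := by
  have hFa : ∀ a, Measurable (F a) := fun a => hF.comp measurable_prodMk_left
  calc ∫⁻ ω, bernoulliKL μ g (F (W ω)) ∂P + crossEntropyRisk μ g g
      = ∫⁻ ω, bernoulliKL μ g (F (W ω)) ∂P + ∫⁻ _, crossEntropyRisk μ g g ∂P := by
        rw [lintegral_const, measure_univ, mul_one]
    _ = ∫⁻ ω, crossEntropyRisk μ g (F (W ω)) ∂P := by
        rw [← lintegral_add_right _ measurable_const]
        simp only [bernoulliKL_add_crossEntropyRisk_self hg hg01 (hF01 _)]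
    _ = ∫⁻ ω, ∫⁻ ω', ENNReal.ofReal (crossEntropy (y ω') (F (W ω) (x ω'))) ∂P ∂P :=
        lintegral_congr fun ω => (hB.lintegral_ofReal_crossEntropy hg hg01 (hFa _) (hF01 _)).symm
    _ = _ := (hWxy.lintegral_comp_eq_lintegral_lintegral hW
        (hB.measurable_design.prodMk hB.measurable_response)
        (F := fun a z => ENNReal.ofReal (crossEntropy z.2 (F a z.1)))
        (measurable_snd.snd.crossEntropy
          (hF.comp (measurable_fst.prodMk measurable_snd.fst))).ennreal_ofReal).symm

end IsBernoulliResponse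

end BernoulliResponse

def sampleBefore {Ω X : Type*} {n : ℕ} (x : Fin n → Ω → X) (y : Fin n → Ω → ℝ) (i : Fin n)
    (ω : Ω) : Finset.Iio i → X × ℝ :=
  fun j => (x j ω, y j ω)

theorem sum_lintegral_bernoulliKL_aggregate_le {Ω X : Type*} [MeasurableSpace Ω]
    [MeasurableSpace X] {P : Measure Ω} [IsProbabilityMeasure P] {μ : Measure X}
    [IsFiniteMeasure μ] {n M : ℕ} {x : Fin n → Ω → X} {y : Fin n → Ω → ℝ} {g : X → ℝ}
    (hB : ∀ i, IsBernoulliResponse P (x i) (y i) μ g) (hg : Measurable g)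
    (hg01 : ∀ v, g v ∈ Set.Icc 0 1) (hindep : iIndepFun (fun i ω => (x i ω, y i ω)) P)
    {ghat : Fin (M + 1) → X → ℝ} (hghat : ∀ m, Measurable (ghat m))
    (hghat01 : ∀ m v, ghat m v ∈ Set.Ioo 0 1) {pri : Fin (M + 1) → ℝ} (hpri : ∀ m, 0 < pri m)
    (hpri₁ : ∑ m, pri m = 1) (m : Fin (M + 1)) :
    ∑ i, ∫⁻ ω, bernoulliKL μ g (aggregate pri ghat (sampleBefore x y i ω)) ∂P
      ≤ ENNReal.ofReal (log (1 / pri m)) + n * bernoulliKL μ g (ghat m) := by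
  have hZ : ∀ i, Measurable fun ω => (x i ω, y i ω) := fun i =>
    (hB i).measurable_design.prodMk (hB i).measurable_response
  have hpast : ∀ i, Measurable (sampleBefore x y i) := fun i =>
    measurable_pi_lambda _ fun j => hZ j
  have hrisk : ∀ i, ∫⁻ ω, bernoulliKL μ g (aggregate pri ghat (sampleBefore x y i ω)) ∂P
        + crossEntropyRisk μ g g
      = ∫⁻ ω, ENNReal.ofReal (crossEntropy (y i ω)
          (aggregate pri ghat (sampleBefore x y i ω) (x i ω))) ∂P := fun i =>
    (hB i).lintegral_bernoulliKL_add_crossEntropyRisk_self hg hg01 (hpast i)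
      (hindep.indepFun_Iio hZ i) (measurable_aggregate hghat) (aggregate_mem_Ioo hpri hghat01)
  have hbench : ∀ i, ∫⁻ ω, ENNReal.ofReal (crossEntropy (y i ω) (ghat m (x i ω))) ∂P
      = crossEntropyRisk μ g (ghat m) := fun i =>
    (hB i).lintegral_ofReal_crossEntropy hg hg01 (hghat m) (hghat01 m)
  have hbench_meas : ∀ i, Measurable fun ω =>
      ENNReal.ofReal (crossEntropy (y i ω) (ghat m (x i ω))) := fun i =>
    ((hB i).measurable_response.crossEntropy
      ((hghat m).comp (hB i).measurable_design)).ennreal_ofReal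
  rw [← ENNReal.add_le_add_iff_right
    (ENNReal.mul_ne_top (ENNReal.natCast_ne_top n) (crossEntropyRisk_self_ne_top (μ := μ) g))]
  calc _ = ∑ i, ∫⁻ ω, ENNReal.ofReal (crossEntropy (y i ω)
          (aggregate pri ghat (sampleBefore x y i ω) (x i ω))) ∂P := by
        simp only [← hrisk, Finset.sum_add_distrib, Finset.sum_const, Finset.card_univ,
          Fintype.card_fin, nsmul_eq_mul]
    _ = ∫⁻ ω, ∑ i, ENNReal.ofReal (crossEntropy (y i ω)
          (aggregate pri ghat (sampleBefore x y i ω) (x i ω))) ∂P :=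
        (lintegral_finsetSum _ fun i _ => ((hB i).measurable_response.crossEntropy
          ((measurable_aggregate hghat).comp ((hpast i).prodMk (hB i).measurable_design)))
          |>.ennreal_ofReal).symm
    _ ≤ ∫⁻ ω, ENNReal.ofReal (log (1 / pri m))
          + ∑ i, ENNReal.ofReal (crossEntropy (y i ω) (ghat m (x i ω))) ∂P :=
        lintegral_mono fun ω => sum_ofReal_crossEntropy_aggregate_le hpri hpri₁ hghat01
          (fun j => (x j ω, y j ω)) (fun i => (hB i).response_eq_zero_or_one ω) m
    _ = ENNReal.ofReal (log (1 / pri m)) + n * crossEntropyRisk μ g (ghat m) := by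
        rw [lintegral_add_left measurable_const, lintegral_const, measure_univ, mul_one,
          lintegral_finsetSum _ fun i _ => hbench_meas i]
        simp only [hbench, Finset.sum_const, Finset.card_univ, Fintype.card_fin, nsmul_eq_mul]
    _ = _ := by
        rw [← bernoulliKL_add_crossEntropyRisk_self hg hg01 (hghat01 m)]
        ring

theorem progressive_mixture_kl_oracle_general
    {Ω : Type*} [MeasurableSpace Ω] (P : Measure Ω) [IsProbabilityMeasure P]
    (p n M : ℕ)
    (μ : Measure (Fin p → ℝ)) [IsProbabilityMeasure μ]
    (g : (Fin p → ℝ) → ℝ) (hgmeas : Measurable g)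
    (hg01 : ∀ v, g v ∈ Set.Icc (0 : ℝ) 1)
    (x : Fin n → Ω → (Fin p → ℝ)) (y : Fin n → Ω → ℝ)
    (hxmeas : ∀ i, Measurable (x i)) (hymeas : ∀ i, Measurable (y i))
    (hxlaw : ∀ i, Measure.map (x i) P = μ)
    (hy01 : ∀ i ω, y i ω = 0 ∨ y i ω = 1)
    (hycond : ∀ i,
      P[y i | MeasurableSpace.comap (x i) inferInstance] =ᵐ[P] fun ω => g (x i ω))
    (hindep : iIndepFun (fun i ω => (x i ω, y i ω)) P)
    (ghat : Fin (M + 1) → (Fin p → ℝ) → ℝ) (hghatmeas : ∀ m, Measurable (ghat m))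
    (hghatr : ∀ m v, ghat m v ∈ Set.Ioo (0 : ℝ) 1)
    (pri : Fin (M + 1) → ℝ) (hpri : ∀ m, 0 < pri m) (hpri1 : ∑ m, pri m = 1) :
    ∀ m : Fin (M + 1),
      ∑ i : Fin n,
          ∫⁻ ω, bernoulliKL μ g
            (fun v => ∑ m' : Fin (M + 1),
              expWeight pri 1
                (fun m'' j => crossEntropy (y j ω) (ghat m'' (x j ω))) m' i
                * ghat m' v) ∂P
        ≤ ENNReal.ofReal (Real.log (1 / pri m)) + n * bernoulliKL μ g (ghat m) := by
  intro m
  have hweight : ∀ (i : Fin n) (ω : Ω) (m' : Fin (M + 1)),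
      expWeight pri 1 (fun m'' j => crossEntropy (y j ω) (ghat m'' (x j ω))) m' i
        = gibbsWeight pri (cumulativeLoss ghat (sampleBefore x y i ω)) m' := fun i ω m' =>
    (gibbsWeight_cumulativeLoss_Iio (fun j => (x j ω, y j ω)) i m').symm
  simp only [hweight]
  exact sum_lintegral_bernoulliKL_aggregate_le
    (fun i => ⟨hxmeas i, hymeas i, hxlaw i, hy01 i, hycond i⟩) hgmeas hg01 hindep hghatmeas
    hghatr hpri hpri1 m

/-- the progressive-mixture Kullback–Leibler oracle inequality, the main
intermediate result in the proof of Theorem 2.  With i.i.d. pairs `(x i, y i)`,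
`x i ∼ μ`, `y i | x i ∼ Bernoulli(g(x i))` (encoded by `y i ∈ {0,1}` and
`E[y i | x i] = g(x i)` a.s.), candidates `ĝ^{(m)}` with values in `(0,1)`, priors
`π_m > 0` summing to one, exponential weights with `λ = 1` and cross-entropy loss, and
`g̃_i = Σ_m w_{m,i} ĝ^{(m)}`, one has for every `m`,
`Σ_{i=1}^{ñ} E[D(g‖g̃_i)] ≤ log(1/π_m) + ñ·D(g‖ĝ^{(m)})`. -/
theorem progressive_mixture_kl_oracle
    {Ω : Type*} [MeasurableSpace Ω] (P : Measure Ω) [IsProbabilityMeasure P]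
    (p n M : ℕ) (hn : 1 ≤ n)
    (μ : Measure (Fin p → ℝ)) [IsProbabilityMeasure μ]
    (g : (Fin p → ℝ) → ℝ) (hgmeas : Measurable g)
    (hg01 : ∀ v, g v ∈ Set.Icc (0 : ℝ) 1)
    (x : Fin n → Ω → (Fin p → ℝ)) (y : Fin n → Ω → ℝ)
    (hxmeas : ∀ i, Measurable (x i)) (hymeas : ∀ i, Measurable (y i))
    (hxlaw : ∀ i, Measure.map (x i) P = μ)
    (hy01 : ∀ i ω, y i ω = 0 ∨ y i ω = 1)
    (hycond : ∀ i,
      P[y i | MeasurableSpace.comap (x i) inferInstance] =ᵐ[P] fun ω => g (x i ω))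
    (hindep : iIndepFun (fun i ω => (x i ω, y i ω)) P)
    (hident : ∀ i j, Measure.map (fun ω => (x i ω, y i ω)) P
        = Measure.map (fun ω => (x j ω, y j ω)) P)
    (ghat : Fin (M + 1) → (Fin p → ℝ) → ℝ) (hghatmeas : ∀ m, Measurable (ghat m))
    (hghatr : ∀ m v, ghat m v ∈ Set.Ioo (0 : ℝ) 1)
    (pri : Fin (M + 1) → ℝ) (hpri : ∀ m, 0 < pri m) (hpri1 : ∑ m, pri m = 1) :
    ∀ m : Fin (M + 1),
      ∑ i : Fin n,
          ∫⁻ ω, bernoulliKL μ g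
            (fun v => ∑ m' : Fin (M + 1),
              expWeight pri 1
                (fun m'' j => crossEntropy (y j ω) (ghat m'' (x j ω))) m' i
                * ghat m' v) ∂P
        ≤ ENNReal.ofReal (Real.log (1 / pri m)) + n * bernoulliKL μ g (ghat m) :=
  progressive_mixture_kl_oracle_general P p n M μ g hgmeas hg01 x y hxmeas hymeas hxlaw hy01 hycond
    hindep ghat hghatmeas hghatr pri hpri hpri1
end
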